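/- In an MSC, for every event e, the relation ≤ satisfies: e ≤ f if and only if there exists a sequence of distinct processes p₁,…,p_n and events e = e₁, f₁, e₂, f₂, …, e_n, f_n = f with e_i, f_i on process p_i, e_i →proc* f_i for all i, and f_i →msg e_{i+1} for all i < n. (In other words, ≤ equals the union over all repetition-free process sequences 𝕡 of the relations ≤_𝕡.) -/

import Mathlib

/-!
Every `≤`-chain is read off as a `≤_𝕡` witness by following its edges, but `𝕡` may repeat
processes. A repetition is cut out from the front: if `e ≤_{p 𝕢 p 𝕣} f`, the chain enters
process `p` a second time at some `g > e`, and since the events of `p` are totally ordered and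
`≤` is acyclic, `e →proc* g`, so already `e ≤_{p 𝕣} f`.
-/

/-- A message sequence chart (MSC) over processes `P`, labels `A`, and event set `E`. -/
structure MSC (P A E : Type) [Fintype E] where
  proc : E → P
  lbl : E → A
  pnext : E → E → Prop
  msg : E → E → Prop
  pnext_proc : ∀ {e f}, pnext e f → proc e = proc f
  pnext_succ_unique : ∀ {e f f'}, pnext e f → pnext e f' → f = f'
  pnext_pred_unique : ∀ {e e' f}, pnext e f → pnext e' f → e = e'
  msg_proc : ∀ {e f}, msg e f → proc e ≠ proc f
  msg_send_unique : ∀ {e f f'}, msg e f → msg e f' → f = f'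
  msg_recv_unique : ∀ {e e' f}, msg e f → msg e' f → e = e'
  msg_not_send_recv : ∀ {e f g}, msg e f → ¬ msg g e
  acyclic : ∀ e, ¬ Relation.TransGen (fun a b => pnext a b ∨ msg a b) e e
  proc_total : ∀ {e f}, proc e = proc f →
    Relation.ReflTransGen pnext e f ∨ Relation.ReflTransGen pnext f e
  fifo : ∀ {e e' f f'}, msg e f → msg e' f' → proc e = proc e' → proc f = proc f' →
    (Relation.ReflTransGen pnext e e' ↔ Relation.ReflTransGen pnext f f')

namespace MSC

variable {P A E : Type} [Fintype E]

/-- The edge relation `→proc ∪ →msg`. -/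
def edge (M : MSC P A E) (e f : E) : Prop := M.pnext e f ∨ M.msg e f

/-- The partial order `≤ = (→proc ∪ →msg)*`. -/
def le (M : MSC P A E) (e f : E) : Prop := Relation.ReflTransGen M.edge e f

/-- The strict order `< = (→proc ∪ →msg)⁺`. -/
def lt (M : MSC P A E) (e f : E) : Prop := Relation.TransGen M.edge e f

/-- `e ∥ f`: incomparability w.r.t. `≤`. -/
def par (M : MSC P A E) (e f : E) : Prop := ¬ M.le e f ∧ ¬ M.le f e

/-- `e ⋖ f`: strict order minus the direct process/message edges. -/
def cless (M : MSC P A E) (e f : E) : Prop := M.lt e f ∧ ¬ M.pnext e f ∧ ¬ M.msg e f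

/-- The (reflexive) order along a single process: `→proc*`. -/
def pord (M : MSC P A E) (e f : E) : Prop := Relation.ReflTransGen M.pnext e f

/-- `Past_p(f) = {g ∈ E_p : g < f}`. -/
def PastP (M : MSC P A E) (p : P) (f : E) : Set E := {g | M.proc g = p ∧ M.lt g f}

/-- `Fut_p(f) = {g ∈ E_p : f < g}`. -/
def FutP (M : MSC P A E) (p : P) (f : E) : Set E := {g | M.proc g = p ∧ M.lt f g}

/-- `Par_p(f) = {g ∈ E_p : g ∥ f}`. -/
def ParP (M : MSC P A E) (p : P) (f : E) : Set E := {g | M.proc g = p ∧ M.par g f}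

/-- `S` is an interval of consecutive events on process `p`. -/
def IsInterval (M : MSC P A E) (p : P) (S : Set E) : Prop :=
  (∀ e ∈ S, M.proc e = p) ∧
  ∀ e f g, e ∈ S → g ∈ S → M.pord e f → M.pord f g → f ∈ S

/-- The interval `[e,e'] = {g ∈ E_p : e ≤ g ≤ e'}` on process `p`. -/
def Intv (M : MSC P A E) (p : P) (e e' : E) : Set E :=
  {g | M.proc g = p ∧ M.pord e g ∧ M.pord g e'}

end MSC

/-- `e ≤_𝕡 f` for a process sequence `𝕡`. -/
def MSC.leSeq {P A E : Type} [Fintype E] (M : MSC P A E) : List P → E → E → Prop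
  | [], _, _ => False
  | [p], e, f => M.proc e = p ∧ M.pord e f
  | p :: ps, e, f => M.proc e = p ∧ ∃ g h, M.pord e g ∧ M.msg g h ∧ M.leSeq ps h f

namespace MSC

variable {P A E : Type} [Fintype E] (M : MSC P A E)

lemma proc_eq_of_pord {e f : E} (h : M.pord e f) : M.proc e = M.proc f := by
  induction h with
  | refl => rfl
  | tail _ hnext ih => exact ih.trans (M.pnext_proc hnext)

lemma le_of_pord {e f : E} (h : M.pord e f) : M.le e f :=
  Relation.ReflTransGen.mono (fun _ _ => Or.inl) e f h

lemma lt_of_pord_of_msg {e g h : E} (hpord : M.pord e g) (hmsg : M.msg g h) : M.lt e h :=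
  Relation.TransGen.tail' (M.le_of_pord hpord) (Or.inr hmsg)

lemma not_pord_of_lt {e f : E} (hlt : M.lt e f) : ¬ M.pord f e := fun hpord =>
  M.acyclic e (hlt.trans_left (M.le_of_pord hpord))

lemma leSeq_cons_of_ne_nil {p : P} {ps : List P} (hps : ps ≠ []) {e f : E} :
    M.leSeq (p :: ps) e f ↔ M.proc e = p ∧ ∃ g h, M.pord e g ∧ M.msg g h ∧ M.leSeq ps h f := by
  cases ps with
  | nil => exact absurd rfl hps
  | cons => rfl

lemma ne_nil_of_leSeq {ps : List P} {e f : E} (h : M.leSeq ps e f) : ps ≠ [] := by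
  rintro rfl
  exact h

lemma proc_eq_of_leSeq_cons {p : P} {ps : List P} {e f : E} (h : M.leSeq (p :: ps) e f) :
    M.proc e = p := by
  cases ps <;> exact h.1

lemma le_of_leSeq : ∀ {ps : List P} {e f : E}, M.leSeq ps e f → M.le e f
  | [], _, _, h => h.elim
  | [_], _, _, h => M.le_of_pord h.2
  | _ :: _ :: _, _, _, ⟨_, _, _, hpord, hmsg, hrest⟩ =>
    (M.lt_of_pord_of_msg hpord hmsg).to_reflTransGen.trans (le_of_leSeq hrest)

lemma leSeq_of_pord_of_leSeq {ps : List P} {e g f : E} (hpord : M.pord e g)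
    (h : M.leSeq ps g f) : M.leSeq ps e f := by
  match ps, h with
  | [_], ⟨hp, hgf⟩ => exact ⟨(M.proc_eq_of_pord hpord).trans hp, hpord.trans hgf⟩
  | _ :: _ :: _, ⟨hp, a, b, hga, hmsg, hrest⟩ =>
    exact ⟨(M.proc_eq_of_pord hpord).trans hp, a, b, hpord.trans hga, hmsg, hrest⟩

lemma leSeq_of_leSeq_of_pnext : ∀ {ps : List P} {e g f : E},
    M.leSeq ps e g → M.pnext g f → M.leSeq ps e f
  | [_], _, _, _, ⟨hp, heg⟩, hnext => ⟨hp, heg.tail hnext⟩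
  | _ :: _ :: _, _, _, _, ⟨hp, a, b, hea, hmsg, hrest⟩, hnext =>
    ⟨hp, a, b, hea, hmsg, leSeq_of_leSeq_of_pnext hrest hnext⟩

lemma leSeq_append_of_msg : ∀ {ps : List P} {e g f : E},
    M.leSeq ps e g → M.msg g f → M.leSeq (ps ++ [M.proc f]) e f
  | [_], _, g, _, ⟨hp, heg⟩, hmsg => ⟨hp, g, _, heg, hmsg, rfl, .refl⟩
  | _ :: _ :: _, _, _, _, ⟨hp, a, b, hea, hmsg, hrest⟩, hmsg' =>
    ⟨hp, a, b, hea, hmsg, leSeq_append_of_msg hrest hmsg'⟩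

lemma exists_leSeq_of_le {e f : E} (h : M.le e f) : ∃ ps : List P, M.leSeq ps e f := by
  induction h with
  | refl => exact ⟨[M.proc e], rfl, .refl⟩
  | tail _ hedge ih =>
    obtain ⟨ps, hps⟩ := ih
    rcases hedge with hnext | hmsg
    · exact ⟨ps, M.leSeq_of_leSeq_of_pnext hps hnext⟩
    · exact ⟨_, M.leSeq_append_of_msg hps hmsg⟩

lemma exists_lt_of_leSeq_cons_append {ps qs : List P} (hqs : qs ≠ []) :
    ∀ {p : P} {e f : E}, M.leSeq (p :: (ps ++ qs)) e f → ∃ g, M.lt e g ∧ M.leSeq qs g f := by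
  induction ps with
  | nil =>
    intro p e f h
    obtain ⟨-, a, b, hea, hmsg, hrest⟩ := (M.leSeq_cons_of_ne_nil hqs).1 h
    exact ⟨b, M.lt_of_pord_of_msg hea hmsg, hrest⟩
  | cons q ps ih =>
    rintro p e f ⟨-, a, b, hea, hmsg, hrest⟩
    obtain ⟨g, hbg, hg⟩ := ih hrest
    exact ⟨g, (M.lt_of_pord_of_msg hea hmsg).trans hbg, hg⟩

lemma leSeq_cons_of_leSeq_cons_append_cons {p : P} {ps qs : List P} {e f : E}
    (h : M.leSeq (p :: (ps ++ p :: qs)) e f) : M.leSeq (p :: qs) e f := by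
  obtain ⟨g, heg, hg⟩ := M.exists_lt_of_leSeq_cons_append (List.cons_ne_nil p qs) h
  have hproc : M.proc e = M.proc g :=
    (M.proc_eq_of_leSeq_cons h).trans (M.proc_eq_of_leSeq_cons hg).symm
  rcases M.proc_total hproc with hpord | hpord
  · exact M.leSeq_of_pord_of_leSeq hpord hg
  · exact (M.not_pord_of_lt heg hpord).elim

lemma exists_nodup_leSeq : ∀ {ps : List P} {e f : E}, M.leSeq ps e f →
    ∃ qs : List P, qs.Nodup ∧ M.leSeq qs e f
  | [], _, _, h => h.elim
  | [p], _, _, h => ⟨[p], List.nodup_singleton p, h⟩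
  | p :: _ :: _, e, f, ⟨hp, a, b, hea, hmsg, hrest⟩ => by
    obtain ⟨qs, hnodup, hqs⟩ := exists_nodup_leSeq hrest
    have hpqs : M.leSeq (p :: qs) e f :=
      (M.leSeq_cons_of_ne_nil (M.ne_nil_of_leSeq hqs)).2 ⟨hp, a, b, hea, hmsg, hqs⟩
    by_cases hmem : p ∈ qs
    · obtain ⟨l, l', rfl⟩ := List.append_of_mem hmem
      exact ⟨p :: l', hnodup.sublist (List.suffix_append l _).sublist,
        M.leSeq_cons_of_leSeq_cons_append_cons hpqs⟩
    · exact ⟨p :: qs, List.nodup_cons.2 ⟨hmem, hnodup⟩, hpqs⟩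

end MSC

/-- `≤` is the union of the relations `≤_𝕡` over non-empty
repetition-free process sequences `𝕡`. -/
theorem stmt8 {P A E : Type} [Fintype E] (M : MSC P A E) (e f : E) :
    M.le e f ↔ ∃ ps : List P, ps ≠ [] ∧ ps.Nodup ∧ M.leSeq ps e f := by
  constructor
  · intro h
    obtain ⟨ps, hps⟩ := M.exists_leSeq_of_le h
    obtain ⟨qs, hnodup, hqs⟩ := M.exists_nodup_leSeq hps
    exact ⟨qs, M.ne_nil_of_leSeq hqs, hnodup, hqs⟩
  · rintro ⟨ps, -, -, h⟩
    exact M.le_of_leSeq h
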